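/- Fix a₁, a₂ > 0, ν > 0, and data ỹ ∈ ℝ⁴ with (ỹ₁, ỹ₃) ≠ (0,0), (ỹ₂, ỹ₄) ≠ (0,0), and A ≠ 0. Then ε^+ strictly beats ε^− in both costs: ∑ᵢ λᵢ·(ε^+ᵢ)² < ∑ᵢ λᵢ·(ε^−ᵢ)² and ∑ᵢ (ε^+ᵢ)² < ∑ᵢ (ε^−ᵢ)². -/

import Mathlib

open Matrix Real

noncomputable section

/-- q = (a₁, −a₁, a₂, −a₂). -/
def qv (a₁ a₂ : ℝ) : Fin 4 → ℝ := ![a₁, -a₁, a₂, -a₂]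

/-- The weights λ = (a₁, νa₁, a₂, νa₂). -/
def lv (a₁ a₂ ν : ℝ) : Fin 4 → ℝ := ![a₁, ν * a₁, a₂, ν * a₂]

/-- A = a₁ỹ₁² − ν²a₁ỹ₂² + a₂ỹ₃² − ν²a₂ỹ₄². -/
def Aq (a₁ a₂ ν : ℝ) (y : Fin 4 → ℝ) : ℝ :=
  a₁ * y 0 ^ 2 - ν ^ 2 * a₁ * y 1 ^ 2 + a₂ * y 2 ^ 2 - ν ^ 2 * a₂ * y 3 ^ 2

/-- B = 2ν(a₁ỹ₁² + νa₁ỹ₂² + a₂ỹ₃² + νa₂ỹ₄²). -/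
def Bq (a₁ a₂ ν : ℝ) (y : Fin 4 → ℝ) : ℝ :=
  2 * ν * (a₁ * y 0 ^ 2 + ν * a₁ * y 1 ^ 2 + a₂ * y 2 ^ 2 + ν * a₂ * y 3 ^ 2)

/-- C = ν²(a₁ỹ₁² − a₁ỹ₂² + a₂ỹ₃² − a₂ỹ₄²). -/
def Cq (a₁ a₂ ν : ℝ) (y : Fin 4 → ℝ) : ℝ :=
  ν ^ 2 * (a₁ * y 0 ^ 2 - a₁ * y 1 ^ 2 + a₂ * y 2 ^ 2 - a₂ * y 3 ^ 2)

/-- Δ = B² − 4AC. -/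
def Dq (a₁ a₂ ν : ℝ) (y : Fin 4 → ℝ) : ℝ :=
  Bq a₁ a₂ ν y ^ 2 - 4 * Aq a₁ a₂ ν y * Cq a₁ a₂ ν y

/-- s⁺ = (−B + √Δ)/(2A). -/
def sP (a₁ a₂ ν : ℝ) (y : Fin 4 → ℝ) : ℝ :=
  (-Bq a₁ a₂ ν y + Real.sqrt (Dq a₁ a₂ ν y)) / (2 * Aq a₁ a₂ ν y)

/-- s⁻ = (−B − √Δ)/(2A). -/
def sM (a₁ a₂ ν : ℝ) (y : Fin 4 → ℝ) : ℝ :=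
  (-Bq a₁ a₂ ν y - Real.sqrt (Dq a₁ a₂ ν y)) / (2 * Aq a₁ a₂ ν y)

/-- ε⁺ᵢ = s⁺qᵢỹᵢ/(λᵢ − s⁺qᵢ). -/
def eP (a₁ a₂ ν : ℝ) (y : Fin 4 → ℝ) : Fin 4 → ℝ := fun i =>
  sP a₁ a₂ ν y * qv a₁ a₂ i * y i / (lv a₁ a₂ ν i - sP a₁ a₂ ν y * qv a₁ a₂ i)

/-- ε⁻ᵢ = s⁻qᵢỹᵢ/(λᵢ − s⁻qᵢ). -/
def eM (a₁ a₂ ν : ℝ) (y : Fin 4 → ℝ) : Fin 4 → ℝ := fun i =>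
  sM a₁ a₂ ν y * qv a₁ a₂ i * y i / (lv a₁ a₂ ν i - sM a₁ a₂ ν y * qv a₁ a₂ i)

/-- ε is a critical point of the weighted triangulation problem with weights l:
the constraint ∑ᵢ qᵢ(ỹᵢ + εᵢ)² = 0 holds and there is a Lagrange multiplier s with
lᵢεᵢ = s·qᵢ·(ỹᵢ + εᵢ) for all i. -/
def IsCrit (a₁ a₂ : ℝ) (l : Fin 4 → ℝ) (y ε : Fin 4 → ℝ) : Prop :=
  (∑ i, qv a₁ a₂ i * (y i + ε i) ^ 2 = 0) ∧
    ∃ s : ℝ, ∀ i, l i * ε i = s * qv a₁ a₂ i * (y i + ε i)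

end

set_option maxHeartbeats 1600000 in
/-- ε⁺ strictly beats ε⁻ in both the weighted and the unweighted cost. -/
theorem eps_plus_beats_eps_minus (a₁ a₂ ν : ℝ) (y : Fin 4 → ℝ)
    (ha₁ : 0 < a₁) (ha₂ : 0 < a₂) (hν : 0 < ν)
    (h13 : ¬(y 0 = 0 ∧ y 2 = 0)) (h24 : ¬(y 1 = 0 ∧ y 3 = 0))
    (hA : Aq a₁ a₂ ν y ≠ 0) :
    (∑ i, lv a₁ a₂ ν i * eP a₁ a₂ ν y i ^ 2 <
      ∑ i, lv a₁ a₂ ν i * eM a₁ a₂ ν y i ^ 2) ∧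
    (∑ i, eP a₁ a₂ ν y i ^ 2 < ∑ i, eM a₁ a₂ ν y i ^ 2) := by
  have hy13 : 0 < y 0 ^ 2 + y 2 ^ 2 := by
    rcases not_and_or.mp h13 with h | h <;> positivity
  have hP : 0 < a₁ * y 0 ^ 2 + a₂ * y 2 ^ 2 := by
    rcases not_and_or.mp h13 with h | h
    · nlinarith [mul_pos ha₁ (show (0:ℝ) < y 0 ^ 2 by positivity),
        mul_nonneg ha₂.le (sq_nonneg (y 2))]
    · nlinarith [mul_pos ha₂ (show (0:ℝ) < y 2 ^ 2 by positivity),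
        mul_nonneg ha₁.le (sq_nonneg (y 0))]
  have hQ : 0 < a₁ * y 1 ^ 2 + a₂ * y 3 ^ 2 := by
    rcases not_and_or.mp h24 with h | h
    · nlinarith [mul_pos ha₁ (show (0:ℝ) < y 1 ^ 2 by positivity),
        mul_nonneg ha₂.le (sq_nonneg (y 3))]
    · nlinarith [mul_pos ha₂ (show (0:ℝ) < y 3 ^ 2 by positivity),
        mul_nonneg ha₁.le (sq_nonneg (y 1))]
  set p : ℝ := Real.sqrt (a₁ * y 0 ^ 2 + a₂ * y 2 ^ 2) with hpdef
  set u : ℝ := Real.sqrt (a₁ * y 1 ^ 2 + a₂ * y 3 ^ 2) with hudef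
  have hp : 0 < p := Real.sqrt_pos.mpr hP
  have hu : 0 < u := Real.sqrt_pos.mpr hQ
  have hp2 : p ^ 2 = a₁ * y 0 ^ 2 + a₂ * y 2 ^ 2 := Real.sq_sqrt hP.le
  have hu2 : u ^ 2 = a₁ * y 1 ^ 2 + a₂ * y 3 ^ 2 := Real.sq_sqrt hQ.le
  clear_value p u
  have h1ν : (0:ℝ) < 1 + ν := by linarith
  have h1ν' : (1:ℝ) + ν ≠ 0 := h1ν.ne'
  have hpνu : 0 < p + ν * u := by positivity
  have hAq : Aq a₁ a₂ ν y = (p - ν * u) * (p + ν * u) := by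
    simp only [Aq]; linear_combination -hp2 + ν ^ 2 * hu2
  have hpmνu : p - ν * u ≠ 0 := by
    intro h
    exact hA (by rw [hAq, h, zero_mul])
  have hB : Bq a₁ a₂ ν y = 2 * ν * (p ^ 2 + ν * u ^ 2) := by
    simp only [Bq]; linear_combination (-2 * ν) * hp2 + (-2 * ν ^ 2) * hu2
  have hD0 : Dq a₁ a₂ ν y
      = 4 * ν ^ 2 * (1 + ν) ^ 2 * ((a₁ * y 0 ^ 2 + a₂ * y 2 ^ 2) * (a₁ * y 1 ^ 2 + a₂ * y 3 ^ 2)) := by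
    simp only [Dq, Aq, Bq, Cq]; ring
  have hD : Dq a₁ a₂ ν y = (2 * ν * (1 + ν) * (p * u)) ^ 2 := by
    rw [hD0, ← hp2, ← hu2]; ring
  have hsqrt : Real.sqrt (Dq a₁ a₂ ν y) = 2 * ν * (1 + ν) * (p * u) := by
    rw [hD]; exact Real.sqrt_sq (by positivity)
  have hsP : sP a₁ a₂ ν y = ν * (u - p) / (p + ν * u) := by
    simp only [sP]
    rw [hsqrt, hB, hAq,
      div_eq_div_iff (by exact mul_ne_zero two_ne_zero (mul_ne_zero hpmνu hpνu.ne')) hpνu.ne']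
    ring
  have hsM : sM a₁ a₂ ν y = -(ν * (p + u)) / (p - ν * u) := by
    simp only [sM]
    rw [hsqrt, hB, hAq,
      div_eq_div_iff (by exact mul_ne_zero two_ne_zero (mul_ne_zero hpmνu hpνu.ne')) hpmνu]
    ring
  -- ε⁺ values
  have e0 : eP a₁ a₂ ν y 0 = ν * (u - p) * y 0 / ((1 + ν) * p) := by
    have hd : lv a₁ a₂ ν 0 - sP a₁ a₂ ν y * qv a₁ a₂ 0 = a₁ * ((1 + ν) * p) / (p + ν * u) := by
      show a₁ - sP a₁ a₂ ν y * a₁ = _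
      rw [hsP]; field_simp [hpνu.ne']; ring
    simp only [eP]
    rw [hd, hsP, show qv a₁ a₂ 0 = a₁ from rfl]
    field_simp [ha₁.ne', ha₂.ne', hν.ne', hp.ne', hu.ne', hpνu.ne', hpmνu]
  have e1 : eP a₁ a₂ ν y 1 = (p - u) * y 1 / ((1 + ν) * u) := by
    have hd : lv a₁ a₂ ν 1 - sP a₁ a₂ ν y * qv a₁ a₂ 1 = a₁ * (ν * ((1 + ν) * u)) / (p + ν * u) := by
      show ν * a₁ - sP a₁ a₂ ν y * (-a₁) = _
      rw [hsP]; field_simp [hpνu.ne']; ring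
    simp only [eP]
    rw [hd, hsP, show qv a₁ a₂ 1 = -a₁ from rfl]
    field_simp [ha₁.ne', ha₂.ne', hν.ne', hp.ne', hu.ne', hpνu.ne', hpmνu]
    ring
  have e2 : eP a₁ a₂ ν y 2 = ν * (u - p) * y 2 / ((1 + ν) * p) := by
    have hd : lv a₁ a₂ ν 2 - sP a₁ a₂ ν y * qv a₁ a₂ 2 = a₂ * ((1 + ν) * p) / (p + ν * u) := by
      show a₂ - sP a₁ a₂ ν y * a₂ = _
      rw [hsP]; field_simp [hpνu.ne']; ring
    simp only [eP]
    rw [hd, hsP, show qv a₁ a₂ 2 = a₂ from rfl]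
    field_simp [ha₁.ne', ha₂.ne', hν.ne', hp.ne', hu.ne', hpνu.ne', hpmνu]
  have e3 : eP a₁ a₂ ν y 3 = (p - u) * y 3 / ((1 + ν) * u) := by
    have hd : lv a₁ a₂ ν 3 - sP a₁ a₂ ν y * qv a₁ a₂ 3 = a₂ * (ν * ((1 + ν) * u)) / (p + ν * u) := by
      show ν * a₂ - sP a₁ a₂ ν y * (-a₂) = _
      rw [hsP]; field_simp [hpνu.ne']; ring
    simp only [eP]
    rw [hd, hsP, show qv a₁ a₂ 3 = -a₂ from rfl]
    field_simp [ha₁.ne', ha₂.ne', hν.ne', hp.ne', hu.ne', hpνu.ne', hpmνu]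
    ring
  -- ε⁻ values
  have m0 : eM a₁ a₂ ν y 0 = -(ν * (p + u)) * y 0 / ((1 + ν) * p) := by
    have hd : lv a₁ a₂ ν 0 - sM a₁ a₂ ν y * qv a₁ a₂ 0 = a₁ * ((1 + ν) * p) / (p - ν * u) := by
      show a₁ - sM a₁ a₂ ν y * a₁ = _
      rw [hsM]; field_simp [hpmνu]; ring
    simp only [eM]
    rw [hd, hsM, show qv a₁ a₂ 0 = a₁ from rfl]
    field_simp [ha₁.ne', ha₂.ne', hν.ne', hp.ne', hu.ne', hpνu.ne', hpmνu]
  have m1 : eM a₁ a₂ ν y 1 = -((p + u) * y 1) / ((1 + ν) * u) := by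
    have hd : lv a₁ a₂ ν 1 - sM a₁ a₂ ν y * qv a₁ a₂ 1 = -(a₁ * (ν * ((1 + ν) * u))) / (p - ν * u) := by
      show ν * a₁ - sM a₁ a₂ ν y * (-a₁) = _
      rw [hsM]; field_simp [hpmνu]; ring
    simp only [eM]
    rw [hd, hsM, show qv a₁ a₂ 1 = -a₁ from rfl]
    field_simp [ha₁.ne', ha₂.ne', hν.ne', hp.ne', hu.ne', hpνu.ne', hpmνu]
  have m2 : eM a₁ a₂ ν y 2 = -(ν * (p + u)) * y 2 / ((1 + ν) * p) := by
    have hd : lv a₁ a₂ ν 2 - sM a₁ a₂ ν y * qv a₁ a₂ 2 = a₂ * ((1 + ν) * p) / (p - ν * u) := by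
      show a₂ - sM a₁ a₂ ν y * a₂ = _
      rw [hsM]; field_simp [hpmνu]; ring
    simp only [eM]
    rw [hd, hsM, show qv a₁ a₂ 2 = a₂ from rfl]
    field_simp [ha₁.ne', ha₂.ne', hν.ne', hp.ne', hu.ne', hpνu.ne', hpmνu]
  have m3 : eM a₁ a₂ ν y 3 = -((p + u) * y 3) / ((1 + ν) * u) := by
    have hd : lv a₁ a₂ ν 3 - sM a₁ a₂ ν y * qv a₁ a₂ 3 = -(a₂ * (ν * ((1 + ν) * u))) / (p - ν * u) := by
      show ν * a₂ - sM a₁ a₂ ν y * (-a₂) = _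
      rw [hsM]; field_simp [hpmνu]; ring
    simp only [eM]
    rw [hd, hsM, show qv a₁ a₂ 3 = -a₂ from rfl]
    field_simp [ha₁.ne', ha₂.ne', hν.ne', hp.ne', hu.ne', hpνu.ne', hpmνu]
  have hlt : (u - p) ^ 2 < (u + p) ^ 2 := by nlinarith [mul_pos hp hu]
  constructor
  · -- weighted cost
    have L1 : ∑ i, lv a₁ a₂ ν i * eP a₁ a₂ ν y i ^ 2
        = (u - p) ^ 2 * (ν ^ 2 * (a₁ * y 0 ^ 2 + a₂ * y 2 ^ 2) / ((1 + ν) ^ 2 * p ^ 2)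
            + ν * (a₁ * y 1 ^ 2 + a₂ * y 3 ^ 2) / ((1 + ν) ^ 2 * u ^ 2)) := by
      rw [Fin.sum_univ_four, e0, e1, e2, e3,
        show lv a₁ a₂ ν 0 = a₁ from rfl, show lv a₁ a₂ ν 1 = ν * a₁ from rfl,
        show lv a₁ a₂ ν 2 = a₂ from rfl, show lv a₁ a₂ ν 3 = ν * a₂ from rfl]
      field_simp [ha₁.ne', ha₂.ne', hν.ne', hp.ne', hu.ne', hpνu.ne', hpmνu]
      ring
    have L2 : ∑ i, lv a₁ a₂ ν i * eM a₁ a₂ ν y i ^ 2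
        = (u + p) ^ 2 * (ν ^ 2 * (a₁ * y 0 ^ 2 + a₂ * y 2 ^ 2) / ((1 + ν) ^ 2 * p ^ 2)
            + ν * (a₁ * y 1 ^ 2 + a₂ * y 3 ^ 2) / ((1 + ν) ^ 2 * u ^ 2)) := by
      rw [Fin.sum_univ_four, m0, m1, m2, m3,
        show lv a₁ a₂ ν 0 = a₁ from rfl, show lv a₁ a₂ ν 1 = ν * a₁ from rfl,
        show lv a₁ a₂ ν 2 = a₂ from rfl, show lv a₁ a₂ ν 3 = ν * a₂ from rfl]
      field_simp [ha₁.ne', ha₂.ne', hν.ne', hp.ne', hu.ne', hpνu.ne', hpmνu]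
      ring
    rw [L1, L2]
    refine mul_lt_mul_of_pos_right hlt ?_
    have h1 : 0 < ν ^ 2 * (a₁ * y 0 ^ 2 + a₂ * y 2 ^ 2) / ((1 + ν) ^ 2 * p ^ 2) := by
      apply div_pos (by positivity) (by positivity)
    have h2 : 0 ≤ ν * (a₁ * y 1 ^ 2 + a₂ * y 3 ^ 2) / ((1 + ν) ^ 2 * u ^ 2) := by positivity
    linarith
  · -- unweighted cost
    have U1 : ∑ i, eP a₁ a₂ ν y i ^ 2
        = (u - p) ^ 2 * (ν ^ 2 * (y 0 ^ 2 + y 2 ^ 2) / ((1 + ν) ^ 2 * p ^ 2)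
            + (y 1 ^ 2 + y 3 ^ 2) / ((1 + ν) ^ 2 * u ^ 2)) := by
      rw [Fin.sum_univ_four, e0, e1, e2, e3]
      field_simp [ha₁.ne', ha₂.ne', hν.ne', hp.ne', hu.ne', hpνu.ne', hpmνu]
      ring
    have U2 : ∑ i, eM a₁ a₂ ν y i ^ 2
        = (u + p) ^ 2 * (ν ^ 2 * (y 0 ^ 2 + y 2 ^ 2) / ((1 + ν) ^ 2 * p ^ 2)
            + (y 1 ^ 2 + y 3 ^ 2) / ((1 + ν) ^ 2 * u ^ 2)) := by
      rw [Fin.sum_univ_four, m0, m1, m2, m3]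
      field_simp [ha₁.ne', ha₂.ne', hν.ne', hp.ne', hu.ne', hpνu.ne', hpmνu]
      ring
    rw [U1, U2]
    refine mul_lt_mul_of_pos_right hlt ?_
    have h1 : 0 < ν ^ 2 * (y 0 ^ 2 + y 2 ^ 2) / ((1 + ν) ^ 2 * p ^ 2) := by
      apply div_pos (by positivity) (by positivity)
    have h2 : 0 ≤ (y 1 ^ 2 + y 3 ^ 2) / ((1 + ν) ^ 2 * u ^ 2) := by positivity
    linarith
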